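/- arXiv:0810.5364 — 8 statements merged into one kernel-verified Lean document; each statement's English description precedes it below -/
import Mathlib

section
/- Let (X, φ) be a dynamical system, Z a compact Hausdorff space, σ : Z → Z a homeomorphism, q : Z → X and p' : X̃ → Z continuous surjections such that q ∘ σ = φ ∘ q, p' ∘ φ̃ = σ ∘ p', and q ∘ p' = p (the projection onto the first coordinate). Then p' is a homeomorphism; in particular (X̃, φ̃) and (Z, σ) are conjugate, so the canonical homeomorphism extension is a minimal homeomorphism extension. -/
/-- The inverse-limit space of the dynamical system `(X, φ)`:
sequences `(x₁, x₂, …)` (0-indexed) with `xₙ = φ (xₙ₊₁)`. -/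
def ExtSpace {X : Type*} (φ : X → X) : Set (ℕ → X) :=
  {x | ∀ n, x n = φ (x (n + 1))}

/-- The map `φ̃` on sequences: `(x₁, x₂, …) ↦ (φ(x₁), x₁, x₂, …)`. -/
def extShiftFun {X : Type*} (φ : X → X) (x : ℕ → X) : ℕ → X
  | 0 => φ (x 0)
  | n + 1 => x n

theorem extShiftFun_mem {X : Type*} (φ : X → X) {x : ℕ → X} (hx : x ∈ ExtSpace φ) :
    extShiftFun φ x ∈ ExtSpace φ := by
  intro n
  cases n with
  | zero => rfl
  | succ k => exact hx k

/-- The homeomorphism extension map `φ̃ : X̃ → X̃`. -/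
def extMap {X : Type*} (φ : X → X) : ExtSpace φ → ExtSpace φ :=
  fun x => ⟨extShiftFun φ x.1, extShiftFun_mem φ x.2⟩

/-- The projection `p : X̃ → X` onto the first coordinate. -/
def extProj {X : Type*} (φ : X → X) : ExtSpace φ → X := fun x => x.1 0

/-- If `(Z, σ)` is a homeomorphism extension of `(X, φ)` through which
the canonical extension map `p : X̃ → X` factors (`q ∘ p' = p`, with `p' : X̃ → Z` a
continuous surjection intertwining `φ̃` with `σ` and `q : Z → X` a continuous surjection
intertwining `σ` with `φ`), then `p'` is a homeomorphism; in particular `(X̃, φ̃)` and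
`(Z, σ)` are conjugate, so the canonical homeomorphism extension is a minimal
homeomorphism extension. -/
theorem canonical_extension_minimal
    {X : Type*} [TopologicalSpace X] [CompactSpace X] [T2Space X] [Nonempty X]
    (φ : X → X) (hφ : Continuous φ) (hφs : Function.Surjective φ)
    {Z : Type*} [TopologicalSpace Z] [CompactSpace Z] [T2Space Z]
    (σ : Z ≃ₜ Z) (q : Z → X) (hq : Continuous q) (hqs : Function.Surjective q)
    (hqσ : ∀ z : Z, q (σ z) = φ (q z))
    (p' : ExtSpace φ → Z) (hp' : Continuous p') (hp's : Function.Surjective p')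
    (hp'σ : ∀ xt : ExtSpace φ, p' (extMap φ xt) = σ (p' xt))
    (hfactor : ∀ xt : ExtSpace φ, q (p' xt) = extProj φ xt) :
    ∃ h : ExtSpace φ ≃ₜ Z, ⇑h = p' := by
  -- ExtSpace is compact
  have hclosed : IsClosed (ExtSpace φ) := by
    have : ExtSpace φ = ⋂ n, {x : ℕ → X | x n = φ (x (n + 1))} := by
      ext x; simp [ExtSpace, Set.mem_iInter]
    rw [this]
    exact isClosed_iInter fun n =>
      isClosed_eq (continuous_apply n) (hφ.comp (continuous_apply (n + 1)))
  have : CompactSpace (ExtSpace φ) := isCompact_iff_compactSpace.mp hclosed.isCompact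
  -- key computation
  have key : ∀ n (x : ExtSpace φ), q ((σ.symm)^[n] (p' x)) = x.1 n := by
    intro n
    induction n with
    | zero => intro x; exact hfactor x
    | succ n ih =>
      intro x
      set x' : ExtSpace φ := ⟨fun k => x.1 (k + 1), fun k => x.2 (k + 1)⟩ with hx'
      have hmap : extMap φ x' = x := by
        apply Subtype.ext; funext k
        cases k with
        | zero => exact (x.2 0).symm
        | succ m => rfl
      have hps : σ.symm (p' x) = p' x' := by
        rw [← hmap, hp'σ, Homeomorph.symm_apply_apply]
      rw [Function.iterate_succ_apply, hps, ih x']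
  have hinj : Function.Injective p' := by
    intro x y hxy
    apply Subtype.ext; funext n
    rw [← key n x, ← key n y, hxy]
  exact ⟨Continuous.homeoOfEquivCompactToT2 (f := Equiv.ofBijective p' ⟨hinj, hp's⟩) hp', rfl⟩
end

section
/- Let (X, φ) be a dynamical system. Then (X, φ) is topologically transitive if and only if (X̃, φ̃) is topologically transitive. -/
lemma extMap_iter_zero {X : Type*} (φ : X → X) :
    ∀ (k : ℕ) (z : ExtSpace φ), ((extMap φ)^[k] z).1 0 = φ^[k] (z.1 0) := by
  intro k
  induction k with
  | zero => intro z; rfl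
  | succ m ih =>
    intro z
    rw [Function.iterate_succ_apply, ih, Function.iterate_succ_apply]
    rfl

lemma extMap_iter_apply {X : Type*} (φ : X → X) :
    ∀ (i k : ℕ) (z : ExtSpace φ), ((extMap φ)^[k + i] z).1 i = φ^[k] (z.1 0) := by
  intro i
  induction i with
  | zero => intro k z; exact extMap_iter_zero φ k z
  | succ m ih =>
    intro k z
    have : k + (m + 1) = (k + m) + 1 := by omega
    rw [this, Function.iterate_succ_apply']
    exact ih k z

lemma extSpace_apply {X : Type*} {φ : X → X} {x : ℕ → X} (hx : x ∈ ExtSpace φ) :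
    ∀ (i m : ℕ), x i = φ^[m] (x (i + m)) := by
  intro i m
  induction m with
  | zero => rfl
  | succ m ih =>
    rw [ih, hx (i + m), ← Function.iterate_succ_apply]
    rfl

/-- `(X, φ)` is topologically transitive iff `(X̃, φ̃)` is topologically
transitive, where a system `(Y, ψ)` is topologically transitive if for every nonempty
open `O ⊆ Y` one has `⋃_{n ≥ 0} ψ⁻ⁿ(O) = Y`. -/
theorem topTransitive_iff_extSpace_topTransitive
    {X : Type*} [TopologicalSpace X] [CompactSpace X] [T2Space X] [Nonempty X]
    (φ : X → X) (hφ : Continuous φ) (hφs : Function.Surjective φ) :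
    (∀ O : Set X, IsOpen O → O.Nonempty → (⋃ n : ℕ, φ^[n] ⁻¹' O) = Set.univ) ↔
    (∀ O : Set (ExtSpace φ), IsOpen O → O.Nonempty →
      (⋃ n : ℕ, (extMap φ)^[n] ⁻¹' O) = Set.univ) := by
  have lift : ∀ a : X, ∃ y : ExtSpace φ, y.1 0 = a := by
    choose f hf using hφs
    intro a
    refine ⟨⟨fun n => Nat.rec a (fun _ p => f p) n, fun n => ?_⟩, rfl⟩
    exact (hf _).symm
  constructor
  · intro hX O hO hne
    obtain ⟨x, hxO⟩ := hne
    obtain ⟨V, hV, hVO⟩ := isOpen_induced_iff.mp hO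
    have hxV : (x : ℕ → X) ∈ V := by
      rw [← hVO] at hxO; exact hxO
    obtain ⟨I, u, hu, hpi⟩ := isOpen_pi_iff.mp hV _ hxV
    set N := I.sup id with hN
    have hle : ∀ i ∈ I, i ≤ N := fun i hi => Finset.le_sup (f := id) hi
    set U : Set X := ⋂ i ∈ I, φ^[N - i] ⁻¹' u i with hU
    have hUopen : IsOpen U :=
      isOpen_biInter_finset fun i hi => (hu i hi).1.preimage (hφ.iterate _)
    have hxU : x.1 N ∈ U := by
      refine Set.mem_iInter₂.mpr fun i hi => ?_
      have : x.1 i = φ^[N - i] (x.1 N) := by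
        have h := extSpace_apply x.2 i (N - i)
        rwa [Nat.add_sub_cancel' (hle i hi)] at h
      simpa [← this] using (hu i hi).2
    have htrans := hX U hUopen ⟨x.1 N, hxU⟩
    apply Set.eq_univ_iff_forall.mpr
    intro z
    obtain ⟨k, hk⟩ : ∃ k, φ^[k] (z.1 0) ∈ U := by
      have hz := Set.eq_univ_iff_forall.mp htrans (z.1 0)
      simpa [Set.mem_iUnion] using hz
    refine Set.mem_iUnion.mpr ⟨k + N, ?_⟩
    show (extMap φ)^[k + N] z ∈ O
    rw [← hVO]
    apply hpi
    refine Set.mem_pi.mpr fun i hi => ?_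
    have hkey : ((extMap φ)^[k + N] z).1 i = φ^[N - i] (φ^[k] (z.1 0)) := by
      have h1 : k + N = (k + (N - i)) + i := by
        have := hle i hi; omega
      rw [h1, extMap_iter_apply, ← Function.iterate_add_apply]
      congr 1
      omega
    rw [hkey]
    exact Set.mem_iInter₂.mp hk i hi
  · intro hE O hO hne
    obtain ⟨a, haO⟩ := hne
    set Ot : Set (ExtSpace φ) := (fun y : ExtSpace φ => y.1 0) ⁻¹' O with hOt
    have hOtopen : IsOpen Ot :=
      hO.preimage ((continuous_apply 0).comp continuous_subtype_val)
    have hOtne : Ot.Nonempty := by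
      obtain ⟨y, hy⟩ := lift a
      exact ⟨y, by simp [hOt, hy, haO]⟩
    have htrans := hE Ot hOtopen hOtne
    apply Set.eq_univ_iff_forall.mpr
    intro z
    obtain ⟨y, hy⟩ := lift z
    have hz := Set.eq_univ_iff_forall.mp htrans y
    obtain ⟨n, hn⟩ := Set.mem_iUnion.mp hz
    refine Set.mem_iUnion.mpr ⟨n, ?_⟩
    have : ((extMap φ)^[n] y).1 0 ∈ O := hn
    rwa [extMap_iter_zero, hy] at this
end

section
/- Let (X, φ) be a dynamical system. Then the set of periodic points of (X, φ) is dense in X if and only if the set of periodic points of (X̃, φ̃) is dense in X̃. -/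
section Aux

variable {X : Type*} (φ : X → X)

lemma iter_congr {m : ℕ} {p : X} (hp : φ^[m] p = p) {a b : ℕ}
    (h : a % m = b % m) : φ^[a] p = φ^[b] p := by
  have hper : Function.IsPeriodicPt φ m p := hp
  rw [← hper.iterate_mod_apply a, ← hper.iterate_mod_apply b, h]

/-- A periodic backward orbit through the periodic point `p`, hitting `p` at index `N`. -/
def perSeq (p : X) (m N : ℕ) : ℕ → X := fun n => φ^[(N + (m - 1) * n) % m] p

lemma perSeq_eq {m : ℕ} {p : X} (hp : φ^[m] p = p) (N n : ℕ) :
    perSeq φ p m N n = φ^[N + (m - 1) * n] p :=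
  Function.IsPeriodicPt.iterate_mod_apply hp _

lemma perSeq_mem {m : ℕ} {p : X} (hm : 1 ≤ m) (hp : φ^[m] p = p) (N : ℕ) :
    perSeq φ p m N ∈ ExtSpace φ := by
  intro n
  rw [perSeq_eq φ hp, perSeq_eq φ hp, ← Function.iterate_succ_apply' φ]
  apply iter_congr φ hp
  have : N + (m - 1) * (n + 1) + 1 = N + (m - 1) * n + m := by
    rw [Nat.mul_succ]; omega
  rw [Nat.succ_eq_add_one, this, Nat.add_mod_right]

lemma extMap_perSeq {m : ℕ} {p : X} (hm : 1 ≤ m) (hp : φ^[m] p = p) (N : ℕ) :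
    extMap φ ⟨perSeq φ p m N, perSeq_mem φ hm hp N⟩
      = ⟨perSeq φ p m (N + 1), perSeq_mem φ hm hp (N + 1)⟩ := by
  apply Subtype.ext
  funext n
  cases n with
  | zero =>
      show φ (perSeq φ p m N 0) = perSeq φ p m (N + 1) 0
      rw [perSeq_eq φ hp, perSeq_eq φ hp, ← Function.iterate_succ_apply' φ]
      apply iter_congr φ hp
      simp [Nat.succ_eq_add_one]
  | succ k =>
      show perSeq φ p m N k = perSeq φ p m (N + 1) (k + 1)
      rw [perSeq_eq φ hp, perSeq_eq φ hp]
      apply iter_congr φ hp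
      have : N + 1 + (m - 1) * (k + 1) = N + (m - 1) * k + m := by
        rw [Nat.mul_succ]; omega
      rw [this, Nat.add_mod_right]

lemma extMap_iter_perSeq {m : ℕ} {p : X} (hm : 1 ≤ m) (hp : φ^[m] p = p) (N k : ℕ) :
    (extMap φ)^[k] ⟨perSeq φ p m N, perSeq_mem φ hm hp N⟩
      = ⟨perSeq φ p m (N + k), perSeq_mem φ hm hp (N + k)⟩ := by
  induction k with
  | zero => rfl
  | succ j ih =>
      rw [Function.iterate_succ_apply', ih, extMap_perSeq φ hm hp]
      rfl

lemma perSeq_periodic {m : ℕ} {p : X} (hm : 1 ≤ m) (hp : φ^[m] p = p) (N : ℕ) :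
    (extMap φ)^[m] ⟨perSeq φ p m N, perSeq_mem φ hm hp N⟩
      = ⟨perSeq φ p m N, perSeq_mem φ hm hp N⟩ := by
  rw [extMap_iter_perSeq φ hm hp]
  apply Subtype.ext
  funext n
  show perSeq φ p m (N + m) n = perSeq φ p m N n
  rw [perSeq_eq φ hp, perSeq_eq φ hp]
  apply iter_congr φ hp
  have : N + m + (m - 1) * n = N + (m - 1) * n + m := by omega
  rw [this, Nat.add_mod_right]

/-- coordinates of a point of the extended space are iterated images of later coordinates -/
lemma extSpace_coord {x : ℕ → X} (hx : x ∈ ExtSpace φ) (i k : ℕ) :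
    x i = φ^[k] (x (i + k)) := by
  induction k with
  | zero => rfl
  | succ j ih =>
      rw [ih, Function.iterate_succ_apply]
      show φ^[j] (x (i + j)) = φ^[j] (φ (x (i + j + 1)))
      rw [← hx (i + j)]

lemma extProj_extMap_iter (x : ExtSpace φ) (n : ℕ) :
    extProj φ ((extMap φ)^[n] x) = φ^[n] (extProj φ x) := by
  induction n with
  | zero => rfl
  | succ j ih =>
      rw [Function.iterate_succ_apply', Function.iterate_succ_apply', ← ih]
      rfl

end Aux

/-- The periodic points of `(X, φ)` are dense in `X` iff the periodic
points of `(X̃, φ̃)` are dense in `X̃`. -/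
theorem dense_periodicPts_iff_extSpace
    {X : Type*} [TopologicalSpace X] [CompactSpace X] [T2Space X] [Nonempty X]
    (φ : X → X) (hφ : Continuous φ) (hφs : Function.Surjective φ) :
    Dense {x : X | ∃ n : ℕ, 1 ≤ n ∧ φ^[n] x = x} ↔
    Dense {xt : ExtSpace φ | ∃ n : ℕ, 1 ≤ n ∧ (extMap φ)^[n] xt = xt} := by
  constructor
  · intro hd
    rw [dense_iff_inter_open]
    rintro U hU ⟨x, hxU⟩
    -- U is open in the subtype; get an open set of the product space
    obtain ⟨V, hV, rfl⟩ := isOpen_induced_iff.mp hU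
    have hxV : (x : ℕ → X) ∈ V := hxU
    obtain ⟨I, u, hu, hsub⟩ := isOpen_pi_iff.mp hV _ hxV
    set N : ℕ := I.sup id with hN
    -- the open set around x.1 N
    set W : Set X := ⋂ i ∈ I, (φ^[N - i]) ⁻¹' (u i) with hW
    have hWopen : IsOpen W := by
      apply isOpen_biInter_finset
      intro i _
      exact (hu i ‹i ∈ I›).1.preimage (hφ.iterate _)
    have hxW : (x : ℕ → X) N ∈ W := by
      simp only [hW, Set.mem_iInter, Set.mem_preimage]
      intro i hi
      have hiN : i ≤ N := Finset.le_sup (f := id) hi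
      have : (x : ℕ → X) i = φ^[N - i] ((x : ℕ → X) N) := by
        have := extSpace_coord φ x.2 i (N - i)
        rwa [Nat.add_sub_cancel' hiN] at this
      rw [← this]
      exact (hu i hi).2
    obtain ⟨p, hpW, m, hm, hp⟩ := hd.inter_open_nonempty W hWopen ⟨_, hxW⟩
    -- build the periodic backward orbit
    refine ⟨⟨perSeq φ p m N, perSeq_mem φ hm hp N⟩, ?_, m, hm,
      perSeq_periodic φ hm hp N⟩
    apply hsub
    intro i hi
    have hiN : i ≤ N := Finset.le_sup (f := id) hi
    show perSeq φ p m N i ∈ u i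
    rw [perSeq_eq φ hp]
    have : φ^[N + (m - 1) * i] p = φ^[N - i] p := by
      apply iter_congr φ hp
      have h1 : N + (m - 1) * i = N - i + m * i := by
        cases m with
        | zero => omega
        | succ m' => rw [Nat.succ_sub_one, Nat.succ_mul]; omega
      rw [h1, Nat.add_mul_mod_self_left]
    rw [this]
    have := Set.mem_iInter.mp (Set.mem_iInter.mp hpW i) hi
    exact this
  · intro hd
    rw [dense_iff_inter_open]
    rintro U hU ⟨x, hxU⟩
    -- lift x to a backward orbit
    let s : ℕ → X := fun n => (Function.surjInv hφs)^[n] x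
    have hs : s ∈ ExtSpace φ := by
      intro n
      show (Function.surjInv hφs)^[n] x
          = φ ((Function.surjInv hφs)^[n+1] x)
      rw [Function.iterate_succ_apply', Function.surjInv_eq hφs]
    -- the open set in X̃ of points projecting into U
    have hcont : Continuous (extProj φ) :=
      (continuous_apply 0).comp continuous_subtype_val
    have hUo : IsOpen (extProj φ ⁻¹' U) := hU.preimage hcont
    obtain ⟨y, hyU, n, hn, hy⟩ :=
      hd.inter_open_nonempty (extProj φ ⁻¹' U) hUo ⟨⟨s, hs⟩, hxU⟩
    refine ⟨extProj φ y, hyU, n, hn, ?_⟩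
    rw [← extProj_extMap_iter, hy]
end

section
/- Let (X, φ) be a dynamical system. Then (X, φ) is a minimal dynamical system if and only if (X̃, φ̃) is a minimal dynamical system. -/
lemma extSpace_iterate {X : Type*} {φ : X → X} {x : ℕ → X} (hx : x ∈ ExtSpace φ) :
    ∀ k i, x i = φ^[k] (x (i + k)) := by
  intro k
  induction k with
  | zero => intro i; simp
  | succ k ih =>
    intro i
    have : x (i + (k + 1)) = x ((i + k) + 1) := by ring_nf
    rw [Function.iterate_succ_apply, this, ← hx (i + k)]
    exact ih i

/-- `(X, φ)` is a minimal dynamical system iff `(X̃, φ̃)` is, where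
`(Y, ψ)` is minimal if there is no nonempty proper closed `Z ⊆ Y` with `ψ(Z) = Z`. -/
theorem minimal_iff_extSpace_minimal
    {X : Type*} [TopologicalSpace X] [CompactSpace X] [T2Space X] [Nonempty X]
    (φ : X → X) (hφ : Continuous φ) (hφs : Function.Surjective φ) :
    (¬ ∃ Z : Set X, Z.Nonempty ∧ Z ≠ Set.univ ∧ IsClosed Z ∧ φ '' Z = Z) ↔
    (¬ ∃ Z : Set (ExtSpace φ), Z.Nonempty ∧ Z ≠ Set.univ ∧ IsClosed Z ∧
      extMap φ '' Z = Z) := by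
  have hext_closed : IsClosed (ExtSpace φ) := by
    have : ExtSpace φ = ⋂ n, {x : ℕ → X | x n = φ (x (n + 1))} := by
      ext x; simp [ExtSpace, Set.mem_iInter]
    rw [this]
    exact isClosed_iInter fun n =>
      isClosed_eq (continuous_apply n) (hφ.comp (continuous_apply (n + 1)))
  haveI : CompactSpace (ExtSpace φ) :=
    isCompact_iff_compactSpace.mp (hext_closed.isCompact)
  constructor
  · intro hX
    rintro ⟨Z, hZne, hZne', hZcl, hZinv⟩
    set S : ℕ → Set X := fun n => (fun p : ExtSpace φ => p.1 n) '' Z with hSdef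
    have hSsucc : ∀ n, S (n + 1) = S n := by
      intro n
      ext a
      constructor
      · rintro ⟨p, hp, rfl⟩
        rw [← hZinv] at hp
        obtain ⟨q, hq, rfl⟩ := hp
        exact ⟨q, hq, rfl⟩
      · rintro ⟨q, hq, rfl⟩
        refine ⟨extMap φ q, ?_, rfl⟩
        rw [← hZinv]
        exact Set.mem_image_of_mem _ hq
    have hS0 : ∀ n, S n = S 0 := by
      intro n; induction n with
      | zero => rfl
      | succ k ih => rw [hSsucc, ih]
    have hWcl : IsClosed (S 0) := by
      have hZc : IsCompact Z := hZcl.isCompact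
      exact (hZc.image ((continuous_apply 0).comp continuous_subtype_val)).isClosed
    have hWne : (S 0).Nonempty := hZne.image _
    have hWinv : φ '' S 0 = S 0 := by
      ext a
      constructor
      · rintro ⟨b, ⟨p, hp, rfl⟩, rfl⟩
        refine ⟨extMap φ p, ?_, rfl⟩
        rw [← hZinv]
        exact Set.mem_image_of_mem _ hp
      · rintro ⟨p, hp, rfl⟩
        rw [← hZinv] at hp
        obtain ⟨q, hq, rfl⟩ := hp
        exact ⟨q.1 0, ⟨q, hq, rfl⟩, rfl⟩
    have hSuniv : S 0 = Set.univ := by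
      by_contra h
      exact hX ⟨S 0, hWne, h, hWcl, hWinv⟩
    apply hZne'
    apply Set.eq_univ_of_forall
    intro y
    have hmem : ∀ n, ∃ p ∈ Z, p.1 n = y.1 n := by
      intro n
      have : y.1 n ∈ S n := by rw [hS0, hSuniv]; trivial
      exact this
    choose z hzZ hzn using hmem
    have hagree : ∀ n i, i ≤ n → (z n).1 i = y.1 i := by
      intro n i hin
      obtain ⟨k, rfl⟩ : ∃ k, n = i + k := ⟨n - i, by omega⟩
      rw [extSpace_iterate (z (i + k)).2 k i, hzn, ← extSpace_iterate y.2 k i]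
    have htend : Filter.Tendsto z Filter.atTop (nhds y) := by
      rw [tendsto_subtype_rng, tendsto_pi_nhds]
      intro i
      apply Filter.Tendsto.congr' _ (tendsto_const_nhds (x := y.1 i))
      filter_upwards [Filter.eventually_ge_atTop i] with n hn
      exact (hagree n i hn).symm
    exact hZcl.mem_of_tendsto htend (Filter.Eventually.of_forall hzZ)
  · intro hext
    rintro ⟨W, hWne, hWne', hWcl, hWinv⟩
    have hchoice : ∀ w, w ∈ W → ∃ v, v ∈ W ∧ φ v = w := by
      intro w hw
      rw [← hWinv] at hw
      obtain ⟨v, hv, hvw⟩ := hw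
      exact ⟨v, hv, hvw⟩
    choose g hgW hgφ using hchoice
    obtain ⟨w0, hw0⟩ := hWne
    let b : ℕ → {v : X // v ∈ W} := fun n =>
      Nat.rec ⟨w0, hw0⟩ (fun _ p => ⟨g p.1 p.2, hgW p.1 p.2⟩) n
    have hb : (fun n => (b n).1) ∈ ExtSpace φ := by
      intro n
      exact (hgφ (b n).1 (b n).2).symm
    set Z : Set (ExtSpace φ) := {p | ∀ n, p.1 n ∈ W} with hZdef
    have hZne : Z.Nonempty := ⟨⟨fun n => (b n).1, hb⟩, fun n => (b n).2⟩
    have hZcl : IsClosed Z := by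
      have : Z = ⋂ n, (fun p : ExtSpace φ => p.1 n) ⁻¹' W := by
        ext p; simp [hZdef, Set.mem_iInter]
      rw [this]
      exact isClosed_iInter fun n =>
        hWcl.preimage ((continuous_apply n).comp continuous_subtype_val)
    have hZinv : extMap φ '' Z = Z := by
      ext p
      constructor
      · rintro ⟨q, hq, rfl⟩
        intro n
        cases n with
        | zero =>
          show φ (q.1 0) ∈ W
          rw [← hWinv]
          exact Set.mem_image_of_mem _ (hq 0)
        | succ k => exact hq k
      · intro hp
        have hqmem : (fun n => p.1 (n + 1)) ∈ ExtSpace φ := fun n => p.2 (n + 1)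
        refine ⟨⟨fun n => p.1 (n + 1), hqmem⟩, fun n => hp (n + 1), ?_⟩
        apply Subtype.ext
        funext n
        cases n with
        | zero => exact (p.2 0).symm
        | succ k => rfl
    have hZne' : Z ≠ Set.univ := by
      obtain ⟨x, hx⟩ := Set.ne_univ_iff_exists_notMem W |>.mp hWne'
      let s := Function.surjInv hφs
      have hy : (fun n => s^[n] x) ∈ ExtSpace φ := by
        intro n
        show s^[n] x = φ (s^[n + 1] x)
        rw [Function.iterate_succ_apply']
        exact (Function.surjInv_eq hφs _).symm
      rw [Set.ne_univ_iff_exists_notMem]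
      refine ⟨⟨fun n => s^[n] x, hy⟩, fun h => hx ?_⟩
      simpa using h 0
    exact hext ⟨Z, hZne, hZne', hZcl, hZinv⟩
end

section
/- Let (X, φ) be a dynamical system. Then the set of recurrent points of (X, φ) is dense in X if and only if the set of recurrent points of (X̃, φ̃) is dense in X̃. -/
open Filter Topology Set
set_option linter.unusedSectionVars false

section Rec
variable {Y Z : Type*} [TopologicalSpace Y] [TopologicalSpace Z]

/-- recurrence predicate -/
def IsRec (ψ : Y → Y) (x : Y) : Prop :=
  ∀ U ∈ nhds x, ∀ N : ℕ, ∃ n : ℕ, N ≤ n ∧ ψ^[n] x ∈ U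

theorem IsRec.map {ψ : Y → Y} {ψ' : Z → Z} {π : Y → Z} (hπ : Continuous π)
    (hc : ∀ y, π (ψ y) = ψ' (π y)) {x : Y} (hx : IsRec ψ x) : IsRec ψ' (π x) := by
  intro U hU N
  have hsc : ∀ n y, π (ψ^[n] y) = ψ'^[n] (π y) := by
    intro n
    induction n with
    | zero => intro y; rfl
    | succ k ih =>
      intro y
      rw [Function.iterate_succ_apply, Function.iterate_succ_apply, ih, hc]
  obtain ⟨n, hn, hmem⟩ := hx (π ⁻¹' U) (hπ.continuousAt.preimage_mem_nhds hU) N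
  exact ⟨n, hn, by rw [← hsc]; exact hmem⟩

end Rec

section Plim
variable {X : Type*} [TopologicalSpace X] [CompactSpace X] [T2Space X]

attribute [local instance] Ultrafilter.add Ultrafilter.addSemigroup

/-- ultrafilter limit -/
noncomputable def plim (p : Ultrafilter ℕ) (f : ℕ → X) : X := (p.map f).lim

theorem plim_tendsto (p : Ultrafilter ℕ) (f : ℕ → X) : Tendsto f ↑p (𝓝 (plim p f)) := by
  have := (p.map f).le_nhds_lim
  rwa [Ultrafilter.coe_map] at this

theorem plim_eq {p : Ultrafilter ℕ} {f : ℕ → X} {a : X} (h : Tendsto f ↑p (𝓝 a)) :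
    plim p f = a :=
  tendsto_nhds_unique (plim_tendsto p f) h

theorem plim_comp {p : Ultrafilter ℕ} {f : ℕ → X} {g : X → X} (hg : Continuous g) :
    g (plim p f) = plim p (fun n => g (f n)) :=
  (plim_eq ((hg.tendsto _).comp (plim_tendsto p f))).symm

theorem plim_add (p q : Ultrafilter ℕ) (f : ℕ → X) :
    plim (p + q) f = plim p (fun n => plim q (fun m => f (n + m))) := by
  apply plim_eq
  rw [tendsto_nhds]
  intro U hUopen hUmem
  have hp : ∀ᶠ n in (p : Filter ℕ), plim q (fun m => f (n + m)) ∈ U :=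
    (plim_tendsto p (fun n => plim q (fun m => f (n + m)))) (hUopen.mem_nhds hUmem)
  have : ∀ᶠ n in (p : Filter ℕ), ∀ᶠ m in (q : Filter ℕ), f (n + m) ∈ U := by
    filter_upwards [hp] with n hn
    exact (plim_tendsto q (fun m => f (n + m))) (hUopen.mem_nhds hn)
  exact (Ultrafilter.eventually_add p q (fun k => f k ∈ U)).mpr this

end Plim

section Key
variable {X : Type*} [TopologicalSpace X] [CompactSpace X] [T2Space X]

attribute [local instance] Ultrafilter.add Ultrafilter.addSemigroup

set_option maxHeartbeats 800000

theorem exists_rec_preimage {φ : X → X} (hφ : Continuous φ) (hφs : Function.Surjective φ)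
    {z : X} (hz : IsRec φ z) : ∃ w : X, φ w = z ∧ IsRec φ w := by
  classical
  set g : ℕ → X := fun n => φ^[n] z with hg
  set S : Set (Ultrafilter ℕ) :=
    {p | (∀ U ∈ 𝓝 z, g ⁻¹' U ∈ p) ∧ ∀ N : ℕ, {n | N ≤ n} ∈ p} with hS
  -- S is nonempty
  have hFne : (atTop ⊓ comap g (𝓝 z)).NeBot := by
    rw [neBot_iff]
    intro hbot
    have : (∅ : Set ℕ) ∈ atTop ⊓ comap g (𝓝 z) := by rw [hbot]; exact mem_bot
    rw [mem_inf_iff] at this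
    obtain ⟨t₁, ht₁, t₂, ht₂, hteq⟩ := this
    obtain ⟨U, hU, hUsub⟩ := mem_comap.mp ht₂
    obtain ⟨N, hN⟩ := mem_atTop_sets.mp ht₁
    obtain ⟨n, hn, hmem⟩ := hz U hU N
    have : n ∈ t₁ ∩ t₂ := ⟨hN n hn, hUsub hmem⟩
    rw [← hteq] at this
    exact this
  have hSne : S.Nonempty := by
    refine ⟨Ultrafilter.of (atTop ⊓ comap g (𝓝 z)), ?_, ?_⟩
    · intro U hU
      exact Ultrafilter.of_le _ (mem_inf_of_right (preimage_mem_comap hU))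
    · intro N
      exact Ultrafilter.of_le _ (mem_inf_of_left (mem_atTop N))
  -- S is compact (closed in compact space)
  have hSclosed : IsClosed S := by
    have h1 : IsClosed {p : Ultrafilter ℕ | ∀ U ∈ 𝓝 z, g ⁻¹' U ∈ p} := by
      have : {p : Ultrafilter ℕ | ∀ U ∈ 𝓝 z, g ⁻¹' U ∈ p} =
          ⋂ U ∈ 𝓝 z, {p : Ultrafilter ℕ | g ⁻¹' U ∈ p} := by
        ext p; simp
      rw [this]
      exact isClosed_biInter fun U _ => ultrafilter_isClosed_basic _
    have h2 : IsClosed {p : Ultrafilter ℕ | ∀ N : ℕ, {n | N ≤ n} ∈ p} := by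
      have : {p : Ultrafilter ℕ | ∀ N : ℕ, {n | N ≤ n} ∈ p} =
          ⋂ N : ℕ, {p : Ultrafilter ℕ | {n | N ≤ n} ∈ p} := by
        ext p; simp
      rw [this]
      exact isClosed_iInter fun N => ultrafilter_isClosed_basic _
    exact h1.inter h2
  -- S is an additive subsemigroup
  have hSadd : ∀ p ∈ S, ∀ q ∈ S, p + q ∈ S := by
    rintro p ⟨hp1, hp2⟩ q ⟨hq1, hq2⟩
    constructor
    · intro U hU
      obtain ⟨V, hVU, hVopen, hVmem⟩ := mem_nhds_iff.mp hU
      have : ∀ᶠ n in (p : Filter ℕ), ∀ᶠ m in (q : Filter ℕ), g (n + m) ∈ U := by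
        filter_upwards [hp1 V (hVopen.mem_nhds hVmem)] with n hn
        have htd : Tendsto (fun m => g (n + m)) ↑q (𝓝 (g n)) := by
          have h0 : Tendsto g ↑q (𝓝 z) := tendsto_def.mpr fun s hs => hq1 s hs
          have h2 := ((hφ.iterate n).tendsto z).comp h0
          have heq : (fun m => g (n + m)) = φ^[n] ∘ g := by
            funext m
            exact Function.iterate_add_apply φ n m z
          rw [heq]
          exact h2
        filter_upwards [htd (hVopen.mem_nhds hn)] with m hm
        exact hVU hm
      exact (Ultrafilter.eventually_add p q (fun k => k ∈ g ⁻¹' U)).mpr this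
    · intro N
      have : ∀ᶠ n in (p : Filter ℕ), ∀ᶠ m in (q : Filter ℕ), N ≤ n + m := by
        filter_upwards [hp2 N] with n hn
        exact Eventually.of_forall fun m => le_trans hn (Nat.le_add_right n m)
      exact (Ultrafilter.eventually_add p q (fun k => N ≤ k)).mpr this
  -- get an idempotent
  obtain ⟨p, hpS, hpp⟩ := exists_idempotent_in_compact_add_subsemigroup
    Ultrafilter.continuous_add_left S hSne hSclosed.isCompact hSadd
  -- construct the preimage
  obtain ⟨z', hz'⟩ := hφs z
  set w : X := plim p (fun n => φ^[n] z') with hw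
  have hgtend : Tendsto g ↑p (𝓝 z) := tendsto_def.mpr fun s hs => hpS.1 s hs
  have hφw : φ w = z := by
    rw [hw, plim_comp hφ]
    have : (fun n => φ (φ^[n] z')) = g := by
      funext n
      rw [hg, ← Function.iterate_succ_apply' φ n z', Function.iterate_succ_apply, hz']
    rw [this]
    exact plim_eq hgtend
  -- w is recurrent
  have hiter : ∀ k : ℕ, φ^[k] w = plim p (fun n => φ^[k + n] z') := by
    intro k
    rw [hw, plim_comp (hφ.iterate k)]
    congr 1
    funext n
    rw [← Function.iterate_add_apply]
  have hwrec : Tendsto (fun n => φ^[n] w) ↑p (𝓝 w) := by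
    have : plim p (fun n => φ^[n] w) = w := by
      have h2 := plim_add p p (fun n => φ^[n] z')
      rw [hpp] at h2
      have h3 : (fun n => φ^[n] w) = (fun n => plim p (fun m => φ^[n + m] z')) :=
        funext hiter
      rw [h3, ← h2]
    conv in 𝓝 w => rw [← this]
    exact plim_tendsto p _
  refine ⟨w, hφw, ?_⟩
  intro U hU N
  have h1 : (fun n => φ^[n] w) ⁻¹' U ∈ p := hwrec hU
  have h2 : {n | N ≤ n} ∈ p := hpS.2 N
  obtain ⟨n, hn1, hn2⟩ := Ultrafilter.nonempty_of_mem (inter_mem h1 h2)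
  exact ⟨n, hn2, hn1⟩

end Key

section Ext
variable {X : Type*} [TopologicalSpace X] {φ : X → X}

theorem ext_compat {x : ℕ → X} (hx : x ∈ ExtSpace φ) :
    ∀ (k i : ℕ), x i = φ^[k] (x (i + k)) := by
  intro k
  induction k with
  | zero => intro i; rfl
  | succ k ih =>
    intro i
    rw [ih i, hx (i + k), ← Function.iterate_succ_apply]
    rfl

theorem ext_compat_le {x : ℕ → X} (hx : x ∈ ExtSpace φ) {i m : ℕ} (him : i ≤ m) :
    x i = φ^[m - i] (x m) := by
  have := ext_compat hx (m - i) i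
  rwa [Nat.add_sub_cancel' him] at this

theorem extMap_apply (xt : ExtSpace φ) (k : ℕ) :
    ((extMap φ) xt).1 k = φ (xt.1 k) := by
  cases k with
  | zero => rfl
  | succ j => exact xt.2 j

theorem extMap_iterate (n : ℕ) (xt : ExtSpace φ) (k : ℕ) :
    ((extMap φ)^[n] xt).1 k = φ^[n] (xt.1 k) := by
  induction n generalizing xt with
  | zero => rfl
  | succ j ih =>
    rw [Function.iterate_succ_apply, ih (extMap φ xt), extMap_apply,
      ← Function.iterate_succ_apply]

/-- Every neighborhood of a point of the inverse limit contains a cylinder. -/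
theorem exists_cylinder_subset (hφ : Continuous φ) (xt : ExtSpace φ)
    {U : Set (ExtSpace φ)} (hU : U ∈ 𝓝 xt) :
    ∃ m : ℕ, ∃ V : Set X, IsOpen V ∧ xt.1 m ∈ V ∧
      ∀ yt : ExtSpace φ, yt.1 m ∈ V → yt ∈ U := by
  obtain ⟨W, hW, hWsub⟩ := (mem_nhds_subtype _ _ _).mp hU
  rw [nhds_pi, Filter.mem_pi] at hW
  obtain ⟨I, hIfin, t, ht, hsub⟩ := hW
  obtain ⟨m, hm⟩ := hIfin.bddAbove
  refine ⟨m, ⋂ i ∈ I, φ^[m - i] ⁻¹' interior (t i), ?_, ?_, ?_⟩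
  · exact hIfin.isOpen_biInter fun i _ =>
      ((hφ.iterate (m - i)).isOpen_preimage _ isOpen_interior)
  · refine Set.mem_iInter₂.mpr fun i hi => ?_
    have h1 : xt.1 i = φ^[m - i] (xt.1 m) := ext_compat_le xt.2 (hm hi)
    have h2 : xt.1 i ∈ interior (t i) := mem_interior_iff_mem_nhds.mpr (ht i)
    rwa [h1] at h2
  · intro yt hyt
    apply hWsub
    have : yt.1 ∈ I.pi t := by
      refine Set.mem_pi.mpr fun i hi => ?_
      have h1 : yt.1 i = φ^[m - i] (yt.1 m) := ext_compat_le yt.2 (hm hi)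
      rw [h1]
      exact interior_subset (Set.mem_iInter₂.mp hyt i hi)
    exact hsub this

/-- A point of the inverse limit whose coordinates are all recurrent is recurrent. -/
theorem isRec_ext_of_coords (hφ : Continuous φ) {xt : ExtSpace φ}
    (h : ∀ m, IsRec φ (xt.1 m)) : IsRec (extMap φ) xt := by
  intro U hU N
  obtain ⟨m, V, hVo, hVm, hcyl⟩ := exists_cylinder_subset hφ xt hU
  obtain ⟨n, hn, hmem⟩ := h m V (hVo.mem_nhds hVm) N
  refine ⟨n, hn, hcyl _ ?_⟩
  rw [extMap_iterate]
  exact hmem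

/-- Coordinates of a recurrent point of the inverse limit are recurrent. -/
theorem isRec_coord {xt : ExtSpace φ} (h : IsRec (extMap φ) xt) (m : ℕ) :
    IsRec φ (xt.1 m) := by
  have hπ : Continuous (fun yt : ExtSpace φ => yt.1 m) :=
    (continuous_apply m).comp continuous_subtype_val
  exact IsRec.map hπ (fun yt => extMap_apply yt m) h

/-- Lifting a point of `X` to the inverse limit. -/
theorem exists_lift (hφs : Function.Surjective φ) (z : X) :
    ∃ x : ℕ → X, x ∈ ExtSpace φ ∧ x 0 = z := by
  refine ⟨fun n => (Function.surjInv hφs)^[n] z, fun n => ?_, rfl⟩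
  show (Function.surjInv hφs)^[n] z = φ ((Function.surjInv hφs)^[n + 1] z)
  rw [Function.iterate_succ_apply']
  exact (Function.surjInv_eq hφs _).symm

end Ext

section Main
variable {X : Type*} [TopologicalSpace X] [CompactSpace X] [T2Space X]

/-- Produce a recurrent backward orbit through a recurrent point, placed at coordinate `m`. -/
theorem exists_rec_ext_in_cylinder {φ : X → X} (hφ : Continuous φ)
    (hφs : Function.Surjective φ) {z : X} (hz : IsRec φ z) (m : ℕ) :
    ∃ x : ℕ → X, x ∈ ExtSpace φ ∧ x m = z ∧ ∀ n, IsRec φ (x n) := by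
  classical
  have C : ∀ y : {x : X // IsRec φ x}, ∃ w : {x : X // IsRec φ x}, φ w.1 = y.1 := by
    rintro ⟨y, hy⟩
    obtain ⟨w, hw1, hw2⟩ := exists_rec_preimage hφ hφs hy
    exact ⟨⟨w, hw2⟩, hw1⟩
  choose pre hpre using C
  set w : ℕ → {x : X // IsRec φ x} := fun n => pre^[n] ⟨z, hz⟩ with hwdef
  have hw : ∀ n, φ (w (n + 1)).1 = (w n).1 := by
    intro n
    have : w (n + 1) = pre (w n) := Function.iterate_succ_apply' pre n ⟨z, hz⟩
    rw [this]
    exact hpre (w n)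
  have hw0 : (w 0).1 = z := rfl
  refine ⟨fun n => if n ≤ m then φ^[m - n] z else (w (n - m)).1, ?_, ?_, ?_⟩
  · intro n
    by_cases h1 : n + 1 ≤ m
    · have h0 : n ≤ m := by omega
      simp only [if_pos h0, if_pos h1]
      rw [show m - n = (m - (n + 1)) + 1 by omega, Function.iterate_succ_apply']
    · by_cases h0 : n ≤ m
      · have hnm : n = m := by omega
        simp only [if_pos h0, if_neg h1]
        rw [show m - n = 0 by omega, show n + 1 - m = 1 by omega]
        have := hw 0
        rw [hw0] at this
        exact this.symm
      · simp only [if_neg h0, if_neg h1]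
        rw [show n + 1 - m = (n - m) + 1 by omega]
        exact (hw (n - m)).symm
  · simp
  · intro n
    by_cases h0 : n ≤ m
    · simp only [if_pos h0]
      refine IsRec.map (hφ.iterate (m - n)) (fun y => ?_) hz
      rw [← Function.iterate_succ_apply, Function.iterate_succ_apply']
    · simp only [if_neg h0]
      exact (w (n - m)).2

end Main

/-- The recurrent points of `(X, φ)` are dense in `X` iff the recurrent
points of `(X̃, φ̃)` are dense in `X̃`, where a point `z` is recurrent for `ψ` if for every
neighborhood `U` of `z` and every `N` there exists `n ≥ N` with `ψⁿ(z) ∈ U`. -/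
theorem dense_recurrentPts_iff_extSpace
    {X : Type*} [TopologicalSpace X] [CompactSpace X] [T2Space X] [Nonempty X]
    (φ : X → X) (hφ : Continuous φ) (hφs : Function.Surjective φ) :
    Dense {x : X | ∀ U ∈ nhds x, ∀ N : ℕ, ∃ n : ℕ, N ≤ n ∧ φ^[n] x ∈ U} ↔
    Dense {xt : ExtSpace φ | ∀ U ∈ nhds xt, ∀ N : ℕ, ∃ n : ℕ, N ≤ n ∧
      (extMap φ)^[n] xt ∈ U} := by
  have hR : {x : X | ∀ U ∈ nhds x, ∀ N : ℕ, ∃ n : ℕ, N ≤ n ∧ φ^[n] x ∈ U} =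
      {x : X | IsRec φ x} := rfl
  have hRt : {xt : ExtSpace φ | ∀ U ∈ nhds xt, ∀ N : ℕ, ∃ n : ℕ, N ≤ n ∧
      (extMap φ)^[n] xt ∈ U} = {xt : ExtSpace φ | IsRec (extMap φ) xt} := rfl
  rw [hR, hRt]
  constructor
  · intro hd xt
    rw [mem_closure_iff_nhds]
    intro U hU
    obtain ⟨m, V, hVo, hVm, hcyl⟩ := exists_cylinder_subset hφ xt hU
    obtain ⟨z, hzV, hzrec⟩ := mem_closure_iff_nhds.mp (hd (xt.1 m)) V (hVo.mem_nhds hVm)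
    obtain ⟨x, hxmem, hxm, hxrec⟩ := exists_rec_ext_in_cylinder hφ hφs hzrec m
    refine ⟨⟨x, hxmem⟩, hcyl _ ?_, ?_⟩
    · show x m ∈ V
      rw [hxm]
      exact hzV
    · exact isRec_ext_of_coords hφ (fun k => hxrec k)
  · intro hd x
    rw [mem_closure_iff_nhds]
    intro U hU
    obtain ⟨xl, hxl, hxl0⟩ := exists_lift hφs x
    set xt : ExtSpace φ := ⟨xl, hxl⟩ with hxt
    have hC : {yt : ExtSpace φ | yt.1 0 ∈ U} ∈ 𝓝 xt := by
      have hev : Continuous (fun yt : ExtSpace φ => yt.1 0) :=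
        (continuous_apply 0).comp continuous_subtype_val
      have hU' : U ∈ 𝓝 (xt.1 0) := by
        show U ∈ 𝓝 (xl 0)
        rw [hxl0]
        exact hU
      exact hev.continuousAt.preimage_mem_nhds hU'
    obtain ⟨yt, hytU, hytrec⟩ := mem_closure_iff_nhds.mp (hd xt) _ hC
    exact ⟨yt.1 0, hytU, isRec_coord hytrec 0⟩
end

section
/- Let (X, φ) be a dynamical system. If x ∈ X is a recurrent point of φ, then there exists x̃ ∈ X̃ with p(x̃) = x such that x̃ is a recurrent point of φ̃. -/
lemma extMap_iterate_coord {X : Type*} (φ : X → X) (zt : ExtSpace φ) :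
    ∀ n j, j ≤ n → ((((extMap φ)^[n] zt) : ExtSpace φ) : ℕ → X) j
      = φ^[n - j] ((zt : ℕ → X) 0) := by
  intro n
  induction n with
  | zero => intro j hj; simp [Nat.le_zero.mp hj]
  | succ n ih =>
    intro j hj
    rw [Function.iterate_succ_apply']
    cases j with
    | zero =>
      show φ (((((extMap φ)^[n] zt) : ExtSpace φ) : ℕ → X) 0) = _
      rw [ih 0 (Nat.zero_le n)]
      simp [Function.iterate_succ_apply']
    | succ k =>
      show ((((extMap φ)^[n] zt) : ExtSpace φ) : ℕ → X) k = _
      rw [ih k (Nat.le_of_succ_le_succ hj)]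
      congr 1
      omega

/-- If `x ∈ X` is a recurrent point of `φ`, then there exists
`x̃ ∈ X̃` with `p(x̃) = x` which is a recurrent point of `φ̃`. -/
theorem exists_recurrent_lift
    {X : Type*} [TopologicalSpace X] [CompactSpace X] [T2Space X] [Nonempty X]
    (φ : X → X) (hφ : Continuous φ) (hφs : Function.Surjective φ)
    (x : X) (hx : ∀ U ∈ nhds x, ∀ N : ℕ, ∃ n : ℕ, N ≤ n ∧ φ^[n] x ∈ U) :
    ∃ xt : ExtSpace φ, extProj φ xt = x ∧
      ∀ U ∈ nhds xt, ∀ N : ℕ, ∃ n : ℕ, N ≤ n ∧ (extMap φ)^[n] xt ∈ U := by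
  classical
  set f : ℕ → X := fun n => φ^[n] x with hf
  set F : Filter ℕ := Filter.atTop ⊓ Filter.comap f (nhds x) with hF
  have hFne : F.NeBot := by
    rw [hF, Filter.inf_neBot_iff]
    intro s hs t ht
    obtain ⟨N, hN⟩ := Filter.mem_atTop_sets.mp hs
    obtain ⟨U, hU, hUt⟩ := Filter.mem_comap.mp ht
    obtain ⟨n, hn, hnU⟩ := hx U hU N
    exact ⟨n, hN n hn, hUt hnU⟩
  set 𝒰 : Ultrafilter ℕ := Ultrafilter.of F with h𝒰
  have hUF : (𝒰 : Filter ℕ) ≤ F := Ultrafilter.of_le F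
  have hU_top : (𝒰 : Filter ℕ) ≤ Filter.atTop := hUF.trans inf_le_left
  have hU_comap : (𝒰 : Filter ℕ) ≤ Filter.comap f (nhds x) := hUF.trans inf_le_right
  set g : ℕ → ℕ → X := fun j n => φ^[n - j] x with hg
  set xl : ℕ → X := fun j => (𝒰.map (g j)).lim with hxl
  have hlim : ∀ j, Filter.Tendsto (g j) 𝒰 (nhds (xl j)) := fun j =>
    (𝒰.map (g j)).le_nhds_lim
  have hmem : xl ∈ ExtSpace φ := by
    intro j
    have h1 : Filter.Tendsto (φ ∘ g (j + 1)) 𝒰 (nhds (φ (xl (j + 1)))) :=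
      (hφ.tendsto _).comp (hlim (j + 1))
    have h2 : (φ ∘ g (j + 1)) =ᶠ[(𝒰 : Filter ℕ)] g j := by
      filter_upwards [hU_top (Filter.eventually_ge_atTop (j + 1))] with n hn
      show φ (φ^[n - (j + 1)] x) = φ^[n - j] x
      have : n - j = (n - (j + 1)) + 1 := by omega
      rw [this, Function.iterate_succ_apply']
    have h3 : Filter.Tendsto (g j) 𝒰 (nhds (φ (xl (j + 1)))) := h1.congr' h2
    exact tendsto_nhds_unique (hlim j) h3
  have hx0 : xl 0 = x := by
    have h0 : Filter.Tendsto (g 0) 𝒰 (nhds x) := by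
      have : Filter.Tendsto f 𝒰 (nhds x) := Filter.tendsto_iff_comap.mpr hU_comap
      exact this.congr (fun n => by simp [hg, hf])
    exact tendsto_nhds_unique (hlim 0) h0
  refine ⟨⟨xl, hmem⟩, hx0, ?_⟩
  · intro U hU N
    obtain ⟨V, hV, hVU⟩ := (mem_nhds_subtype (ExtSpace φ) ⟨xl, hmem⟩ U).mp hU
    rw [nhds_pi, Filter.mem_pi] at hV
    obtain ⟨I, hIfin, t, ht, htV⟩ := hV
    obtain ⟨M, hM⟩ := hIfin.bddAbove
    have hS : {n : ℕ | max N M + 1 ≤ n} ∩ ⋂ j ∈ I, (g j) ⁻¹' (t j) ∈ 𝒰 := by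
      refine Filter.inter_mem (hU_top (Filter.mem_atTop _)) ?_
      exact (Filter.biInter_mem hIfin).mpr fun j _ => hlim j (ht j)
    obtain ⟨n, hn1, hn2⟩ := Filter.nonempty_of_mem hS
    refine ⟨n, by simp at hn1; omega, hVU ?_⟩
    refine htV fun j hj => ?_
    have hjn : j ≤ n := by have := hM hj; simp at hn1; omega
    have := extMap_iterate_coord φ ⟨xl, hmem⟩ n j hjn
    show ((((extMap φ)^[n] ⟨xl, hmem⟩) : ExtSpace φ) : ℕ → X) j ∈ t j
    rw [this]
    have : ((⟨xl, hmem⟩ : ExtSpace φ) : ℕ → X) 0 = x := hx0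
    rw [this]
    exact Set.mem_iInter₂.mp hn2 j hj
end

section
/- Let X be a nonempty compact Hausdorff space, φ : X → X a homeomorphism, and x ∈ X aperiodic (so the points φⁿ(x), n ≥ 0, are pairwise distinct). If T is a bounded linear operator on ℓ²(ℕ, ℂ) that commutes with π_x(f) for every f ∈ C(X, ℂ), then T is a diagonal operator: there is a bounded sequence (dₙ) of complex numbers with (Tz)ₙ = dₙ zₙ for all z ∈ ℓ²(ℕ) and all n. Consequently the weak-operator-topology closure of π_x(C(X, ℂ)) is a maximal abelian subalgebra of B(ℓ²(ℕ)). -/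
open scoped ENNReal

section DiagOp

variable {I : Type*}

theorem diag_pointwise_bound {d : I → ℂ} {C : ℝ} (hC : ∀ i, ‖d i‖ ≤ C)
    (z : I → ℂ) (i : I) :
    ‖d i * z i‖ ^ (2 : ℝ≥0∞).toReal ≤
      (max C 0) ^ (2 : ℝ≥0∞).toReal * ‖z i‖ ^ (2 : ℝ≥0∞).toReal := by
  calc ‖d i * z i‖ ^ (2 : ℝ≥0∞).toReal
      = (‖d i‖ * ‖z i‖) ^ (2 : ℝ≥0∞).toReal := by rw [norm_mul]
    _ ≤ (max C 0 * ‖z i‖) ^ (2 : ℝ≥0∞).toReal :=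
        Real.rpow_le_rpow (by positivity)
          (mul_le_mul_of_nonneg_right ((hC i).trans (le_max_left _ _)) (norm_nonneg _))
          (by norm_num)
    _ = _ := Real.mul_rpow (le_max_right C 0) (norm_nonneg _)

theorem memℓp_diag_mul {d : I → ℂ} {C : ℝ} (hC : ∀ i, ‖d i‖ ≤ C)
    (z : lp (fun _ : I => ℂ) 2) : Memℓp (fun i => d i * z i) 2 := by
  have h2 : (0 : ℝ) < (2 : ℝ≥0∞).toReal := by norm_num
  apply memℓp_gen
  have hs : Summable fun i => (max C 0) ^ (2 : ℝ≥0∞).toReal * ‖z i‖ ^ (2 : ℝ≥0∞).toReal :=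
    ((lp.memℓp z).summable h2).mul_left _
  exact hs.of_nonneg_of_le (fun i => Real.rpow_nonneg (norm_nonneg _) _)
    (fun i => diag_pointwise_bound hC (⇑z) i)

/-- The diagonal operator on `ℓ²(I, ℂ)` with diagonal entries `d i`, bounded by `C`. -/
noncomputable def diagOp (d : I → ℂ) (C : ℝ) (hC : ∀ i, ‖d i‖ ≤ C) :
    lp (fun _ : I => ℂ) 2 →L[ℂ] lp (fun _ : I => ℂ) 2 :=
  LinearMap.mkContinuous
    { toFun := fun z => (⟨fun i => d i * z i, memℓp_diag_mul hC z⟩ : lp (fun _ : I => ℂ) 2)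
      map_add' := fun z w => Subtype.ext (funext fun i => mul_add (d i) (z i) (w i))
      map_smul' := fun c z => Subtype.ext (funext fun i => mul_left_comm (d i) c (z i)) }
    (max C 0)
    (fun z => by
      have h2 : (0 : ℝ) < (2 : ℝ≥0∞).toReal := by norm_num
      apply lp.norm_le_of_tsum_le h2 (by positivity)
      calc (∑' i, ‖d i * z i‖ ^ (2 : ℝ≥0∞).toReal)
          ≤ ∑' i, (max C 0) ^ (2 : ℝ≥0∞).toReal * ‖z i‖ ^ (2 : ℝ≥0∞).toReal :=
            Summable.tsum_le_tsum (fun i => diag_pointwise_bound hC (⇑z) i)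
              (((memℓp_diag_mul hC z).summable h2))
              (((lp.memℓp z).summable h2).mul_left _)
        _ = (max C 0) ^ (2 : ℝ≥0∞).toReal * ∑' i, ‖z i‖ ^ (2 : ℝ≥0∞).toReal :=
            tsum_mul_left
        _ = (max C 0) ^ (2 : ℝ≥0∞).toReal * ‖z‖ ^ (2 : ℝ≥0∞).toReal := by
            rw [lp.norm_rpow_eq_tsum h2]
        _ = (max C 0 * ‖z‖) ^ (2 : ℝ≥0∞).toReal :=
            (Real.mul_rpow (by positivity) (norm_nonneg _)).symm)

@[simp] theorem diagOp_apply (d : I → ℂ) (C : ℝ) (hC : ∀ i, ‖d i‖ ≤ C)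
    (z : lp (fun _ : I => ℂ) 2) (i : I) : diagOp d C hC z i = d i * z i := rfl

end DiagOp
/-- The orbit representation `π_x(f)`: the diagonal operator on `ℓ²(ℕ, ℂ)` with entries
`f (φ^[n] x)`, i.e. `(π_x(f)z)ₙ = f(φ^{n-1}(x))·zₙ` in 1-indexed notation. -/
noncomputable def piOp {X : Type*} [TopologicalSpace X] [CompactSpace X]
    (φ : X → X) (x : X) (f : C(X, ℂ)) :
    lp (fun _ : ℕ => ℂ) 2 →L[ℂ] lp (fun _ : ℕ => ℂ) 2 :=
  diagOp (fun n : ℕ => f (φ^[n] x)) ‖f‖ (fun n => f.norm_coe_le_norm _)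

/-- Evaluation at a coordinate as a continuous linear map on `ℓ²`. -/
noncomputable def evalCLM (n : ℕ) : lp (fun _ : ℕ => ℂ) 2 →L[ℂ] ℂ :=
  LinearMap.mkContinuous
    { toFun := fun z => z n
      map_add' := fun z w => rfl
      map_smul' := fun c z => rfl }
    1 (fun z => by
      show ‖(z : ℕ → ℂ) n‖ ≤ 1 * ‖z‖
      simpa using lp.norm_apply_le_norm (by norm_num : (2 : ℝ≥0∞) ≠ 0) z n)


/-- Let `X` be a nonempty compact Hausdorff space, `φ : X → X` a
homeomorphism, and `x ∈ X` aperiodic.  If a bounded operator `T` on `ℓ²(ℕ, ℂ)` commutes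
with `π_x(f)` for every `f ∈ C(X, ℂ)`, then `T` is a diagonal operator: there is a
bounded sequence `(dₙ)` of complex numbers with `(Tz)ₙ = dₙ zₙ` for all `z` and `n`.
(Consequently the WOT closure of `π_x(C(X, ℂ))` is maximal abelian.) -/
theorem commutant_of_diagonal_masa
    {X : Type*} [TopologicalSpace X] [CompactSpace X] [T2Space X] [Nonempty X]
    (φ : X ≃ₜ X) (x : X) (hx : ∀ n : ℕ, 1 ≤ n → (⇑φ)^[n] x ≠ x)
    (T : lp (fun _ : ℕ => ℂ) 2 →L[ℂ] lp (fun _ : ℕ => ℂ) 2)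
    (hT : ∀ f : C(X, ℂ), T.comp (piOp ⇑φ x f) = (piOp ⇑φ x f).comp T) :
    ∃ d : ℕ → ℂ, (∃ C : ℝ, ∀ n, ‖d n‖ ≤ C) ∧
      ∀ (z : lp (fun _ : ℕ => ℂ) 2) (n : ℕ), T z n = d n * z n := by
  -- the orbit is injective
  have hdist : ∀ m n : ℕ, m ≠ n → (⇑φ)^[m] x ≠ (⇑φ)^[n] x := by
    have key : ∀ m n : ℕ, m < n → (⇑φ)^[m] x ≠ (⇑φ)^[n] x := by
      intro m n hmn h
      have hinj : Function.Injective ((⇑φ)^[m]) := φ.injective.iterate m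
      have h2 : (⇑φ)^[m] ((⇑φ)^[n - m] x) = (⇑φ)^[m] x := by
        rw [← Function.iterate_add_apply, show m + (n - m) = n by omega]
        exact h.symm
      exact hx (n - m) (by omega) (hinj h2)
    intro m n hmn
    rcases lt_or_gt_of_ne hmn with h | h
    · exact key m n h
    · exact fun hne => key n m h hne.symm
  -- separating functions
  have hsep : ∀ m n : ℕ, m ≠ n →
      ∃ f : C(X, ℂ), f ((⇑φ)^[m] x) = 1 ∧ f ((⇑φ)^[n] x) = 0 := by
    intro m n hmn
    obtain ⟨g, hg0, hg1, -⟩ := exists_continuous_zero_one_of_isClosed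
      (isClosed_singleton (x := (⇑φ)^[n] x)) (isClosed_singleton (x := (⇑φ)^[m] x))
      (by simp [Set.disjoint_singleton, (hdist m n hmn).symm])
    refine ⟨(ContinuousMap.mk Complex.ofReal Complex.continuous_ofReal).comp g, ?_, ?_⟩
    · simp [hg1 rfl]
    · simp [hg0 rfl]
  -- off-diagonal matrix entries vanish
  have hmat : ∀ m n : ℕ, m ≠ n → T (lp.single 2 m 1) n = 0 := by
    intro m n hmn
    obtain ⟨f, hfm, hfn⟩ := hsep m n hmn
    have hfix : piOp (⇑φ) x f (lp.single 2 m 1) = lp.single 2 m 1 := by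
      refine lp.ext (funext fun k => ?_)
      rcases eq_or_ne k m with rfl | hk
      · simp [piOp, lp.single_apply_self, hfm]
      · simp [piOp, lp.single_apply_ne 2 m _ hk, Pi.single_apply, hk]
    have := DFunLike.congr_fun (hT f) (lp.single 2 m 1)
    simp only [ContinuousLinearMap.comp_apply, hfix] at this
    have hn := congrArg (fun w : lp (fun _ : ℕ => ℂ) 2 => w n) this
    simpa [piOp, hfn] using hn
  refine ⟨fun n => T (lp.single 2 n 1) n, ⟨‖T‖, fun n => ?_⟩, fun z n => ?_⟩
  · calc ‖T (lp.single 2 n 1) n‖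
        ≤ ‖T (lp.single 2 n 1)‖ :=
          lp.norm_apply_le_norm (by norm_num) _ n
      _ ≤ ‖T‖ * ‖(lp.single 2 n 1 : lp (fun _ : ℕ => ℂ) 2)‖ := T.le_opNorm _
      _ = ‖T‖ := by
          have h1 : ‖(lp.single 2 n (1:ℂ) : lp (fun _ : ℕ => ℂ) 2)‖ = ‖(1:ℂ)‖ :=
            lp.norm_single (E := fun _ : ℕ => ℂ) (p := 2) (by norm_num) n (1:ℂ)
          rw [h1, norm_one, mul_one]
  · have hsum : HasSum (fun m : ℕ => lp.single 2 m (z m)) z :=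
      lp.hasSum_single (by norm_num) z
    have h1 : HasSum (fun m : ℕ => ((evalCLM n).comp T) (lp.single 2 m (z m))) (T z n) :=
      ((evalCLM n).comp T).hasSum hsum
    have h2 : (fun m : ℕ => ((evalCLM n).comp T) (lp.single 2 m (z m)))
        = fun m : ℕ => if m = n then T (lp.single 2 n 1) n * z n else 0 := by
      funext m
      have hzsm : (lp.single 2 m (z m) : lp (fun _ : ℕ => ℂ) 2) = z m • lp.single 2 m 1 := by
        rw [← lp.single_smul]; norm_num
      rcases eq_or_ne m n with rfl | hm
      · rw [hzsm, map_smul]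
        show z m • T (lp.single 2 m 1) m = _
        rw [smul_eq_mul, mul_comm, if_pos rfl]
      · simp only [if_neg hm]
        rw [hzsm, map_smul]
        show z m • T (lp.single 2 m 1) n = 0
        rw [hmat m n hm, smul_zero]
    rw [h2] at h1
    have h3 : HasSum (fun m : ℕ => if m = n then T (lp.single 2 n 1) n * z n else 0)
        (T (lp.single 2 n 1) n * z n) := hasSum_ite_eq n _
    rw [h1.unique h3, mul_comm]
end

section
/- Let X be a nonempty compact Hausdorff space, φ : X → X continuous, and y ∈ X periodic of minimal period p (φᵖ(y) = y and φʲ(y) ≠ y for 1 ≤ j < p), and let λ ∈ ℂ with |λ| = 1. Then every linear operator T on ℂᵖ that commutes with Π_{y,λ}(U) and with Π_{y,λ}(f) for every f ∈ C(X, ℂ) is a scalar multiple of the identity; that is, the representation Π_{y,λ} is irreducible (in particular it is a nest representation). -/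
/-- The λ-twisted cyclic shift `Π_{y,λ}(U)` as a linear operator on `ℂᵖ`:
`(z₁, …, z_p) ↦ λ·(z_p, z₁, …, z_{p-1})`. -/
def cycL (p : ℕ) (lam : ℂ) : (Fin p → ℂ) →ₗ[ℂ] (Fin p → ℂ) where
  toFun := fun z j => lam * z ((finRotate p).symm j)
  map_add' := fun z w => funext fun j => mul_add _ _ _
  map_smul' := fun c z => funext fun j => mul_left_comm _ _ _

/-- The diagonal linear operator on `ℂᵖ` with diagonal entries `d j`. -/
def diagL {p : ℕ} (d : Fin p → ℂ) : (Fin p → ℂ) →ₗ[ℂ] (Fin p → ℂ) where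
  toFun := fun z j => d j * z j
  map_add' := fun z w => funext fun j => mul_add _ _ _
  map_smul' := fun c z => funext fun j => mul_left_comm _ _ _

/-- For `y ∈ X` periodic of minimal period `p` and `|λ| = 1`, every
linear operator `T` on `ℂᵖ` commuting with `Π_{y,λ}(U)` and with `Π_{y,λ}(f)` for every
`f ∈ C(X, ℂ)` is a scalar multiple of the identity; i.e. `Π_{y,λ}` is irreducible (in
particular a nest representation). -/
theorem periodic_rep_irreducible
    {X : Type*} [TopologicalSpace X] [CompactSpace X] [T2Space X] [Nonempty X]
    (φ : X → X) (hφ : Continuous φ)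
    (y : X) (p : ℕ) (hp : 1 ≤ p) (hy : φ^[p] y = y)
    (hmin : ∀ j : ℕ, 1 ≤ j → j < p → φ^[j] y ≠ y)
    (lam : ℂ) (hlam : ‖lam‖ = 1)
    (T : (Fin p → ℂ) →ₗ[ℂ] (Fin p → ℂ))
    (hTU : T ∘ₗ cycL p lam = cycL p lam ∘ₗ T)
    (hTf : ∀ f : C(X, ℂ),
      T ∘ₗ diagL (fun j : Fin p => f (φ^[(j : ℕ)] y)) =
        diagL (fun j : Fin p => f (φ^[(j : ℕ)] y)) ∘ₗ T) :
    ∃ c : ℂ, T = c • LinearMap.id := by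
  classical
  set x : Fin p → X := fun j => φ^[(j : ℕ)] y with hxdef
  -- the orbit points are pairwise distinct
  have key : ∀ i j : Fin p, (i : ℕ) < (j : ℕ) → x i ≠ x j := by
    intro i j hlt heq
    have h1 : φ^[p - (j : ℕ) + (i : ℕ)] y = y := by
      have h2 := congrArg (φ^[p - (j : ℕ)]) heq
      simp only [hxdef, ← Function.iterate_add_apply] at h2
      have hj : p - (j : ℕ) + (j : ℕ) = p := Nat.sub_add_cancel j.isLt.le
      rw [hj, hy] at h2
      exact h2.symm ▸ h2.symm
    exact hmin _ (by omega) (by have := j.isLt; omega) h1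
  have hinj : Function.Injective x := by
    intro i j hij
    rcases lt_trichotomy (i : ℕ) (j : ℕ) with h | h | h
    · exact absurd hij (key i j h)
    · exact Fin.ext h
    · exact absurd hij.symm (key j i h)
  -- indicator-like continuous functions
  have hdiag : ∀ j : Fin p, ∃ f : C(X, ℂ), f (x j) = 1 ∧ ∀ i, i ≠ j → f (x i) = 0 := by
    intro j
    have hsfin : (x '' {i | i ≠ j}).Finite := (Set.toFinite _).image _
    have hdisj : Disjoint (x '' {i | i ≠ j}) {x j} := by
      rw [Set.disjoint_singleton_right]
      rintro ⟨i, hi, hxi⟩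
      exact hi (hinj hxi)
    obtain ⟨g, hg0, hg1, _⟩ := exists_continuous_zero_one_of_isClosed
      hsfin.isClosed isClosed_singleton hdisj
    refine ⟨⟨fun z => (g z : ℂ), Complex.continuous_ofReal.comp g.continuous⟩, ?_, ?_⟩
    · have := hg1 (Set.mem_singleton (x j)); simp_all
    · intro i hij
      have := hg0 (Set.mem_image_of_mem x (show i ∈ {i | i ≠ j} from hij))
      simp_all
  -- T is diagonal
  have hTdiag : ∀ j i : Fin p, i ≠ j → T (Pi.single j 1) i = 0 := by
    intro j i hij
    obtain ⟨f, hf1, hf0⟩ := hdiag j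
    have hc := hTf f
    have hD : diagL (fun i : Fin p => f (φ^[(i : ℕ)] y)) (Pi.single j 1) = Pi.single j 1 := by
      funext k
      simp only [diagL, LinearMap.coe_mk, AddHom.coe_mk, Pi.single_apply]
      by_cases h : k = j
      · subst h; rw [if_pos rfl, mul_one]; exact hf1
      · rw [if_neg h, mul_zero]
    have heq := congrFun (congrArg (fun L => L (Pi.single j 1)) hc)
    simp only [LinearMap.comp_apply, hD] at heq
    have := heq i
    simp only [diagL, LinearMap.coe_mk, AddHom.coe_mk] at this
    rw [this, hf0 i hij, zero_mul]
  set c : Fin p → ℂ := fun j => T (Pi.single j 1) j with hcdef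
  have hTsingle : ∀ j : Fin p, T (Pi.single j 1) = Pi.single j (c j) := by
    intro j; funext i
    by_cases h : i = j
    · subst h; simp [hcdef]
    · rw [hTdiag j i h, Pi.single_apply, if_neg h]
  -- cycL on basis vectors
  have hcyc : ∀ j : Fin p, cycL p lam (Pi.single j (1 : ℂ))
      = lam • (Pi.single (finRotate p j) 1 : Fin p → ℂ) := by
    intro j; funext i
    simp only [cycL, LinearMap.coe_mk, AddHom.coe_mk, Pi.smul_apply, Pi.single_apply,
      smul_eq_mul]
    by_cases h : (finRotate p).symm i = j
    · have h2 : i = finRotate p j := by rw [← h]; exact ((finRotate p).apply_symm_apply i).symm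
      rw [if_pos h, if_pos h2]
    · have h2 : ¬ i = finRotate p j := fun he => h (by rw [he]; exact (finRotate p).symm_apply_apply j)
      rw [if_neg h, if_neg h2]
  have hlam0 : lam ≠ 0 := by
    intro h; rw [h, norm_zero] at hlam; exact one_ne_zero hlam.symm
  -- the diagonal is constant along the rotation
  have hstep : ∀ j : Fin p, c (finRotate p j) = c j := by
    intro j
    have heq := congrFun (congrArg (fun L => L (Pi.single j 1)) hTU)
    simp only [LinearMap.comp_apply, hcyc, map_smul, hTsingle] at heq
    have h1 : Pi.single j (c j) = c j • (Pi.single j 1 : Fin p → ℂ) := by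
      rw [← Pi.single_smul, smul_eq_mul, mul_one]
    rw [h1, map_smul, hcyc] at heq
    have h2 := heq (finRotate p j)
    simp only [Pi.smul_apply, Pi.single_apply, if_pos rfl, if_true, smul_eq_mul, mul_one] at h2
    exact mul_left_cancel₀ hlam0 (by rw [h2]; ring)
  obtain ⟨m, rfl⟩ : ∃ m, p = m + 1 := ⟨p - 1, (Nat.succ_pred_eq_of_pos hp).symm⟩
  have hconst : ∀ n (h : n < m + 1), c ⟨n, h⟩ = c ⟨0, Nat.succ_pos m⟩ := by
    intro n
    induction n with
    | zero => intro h; rfl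
    | succ k ih =>
      intro h
      have hk : k < m + 1 := Nat.lt_of_succ_lt h
      have hrot : finRotate (m + 1) ⟨k, hk⟩ = ⟨k + 1, h⟩ := by
        rw [finRotate_succ_apply]
        apply Fin.ext
        have hlt : (⟨k, hk⟩ : Fin (m + 1)) < Fin.last m := by
          simp only [Fin.lt_def, Fin.val_last]; omega
        rw [Fin.val_add_one_of_lt hlt]
      rw [← hrot, hstep, ih hk]
  refine ⟨c ⟨0, Nat.succ_pos m⟩, ?_⟩
  apply (Pi.basisFun ℂ (Fin (m + 1))).ext
  intro i
  rw [Pi.basisFun_apply]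
  rw [hTsingle i, hconst i.val i.isLt]
  funext k
  by_cases h : k = i
  · subst h; simp
  · simp [Pi.single_apply, h]
end
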